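/- arXiv:1203.5848 — 2 statements merged into one kernel-verified Lean document; each statement's English description precedes it below -/
import Mathlib

section
/- Let π be a Rogers-Ramanujan partition with exactly s successive lower-Durfee squares. Then π is a partition with exactly s successive Durfee squares; moreover, the lower-Durfee squares coincide with the Durfee squares. -/
/-- The side of the Durfee square of a partition whose parts are listed in
weakly decreasing order `L`: the number of indices `i` with `L[i] ≥ i+1`. -/
def durfee (L : List ℕ) : ℕ :=
  ((Finset.range L.length).filter fun i => i + 1 ≤ L.getD i 0).card

theorem durfee_le (L : List ℕ) : durfee L ≤ L.length := by
  classical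
  calc ((Finset.range L.length).filter fun i => i + 1 ≤ L.getD i 0).card
      ≤ (Finset.range L.length).card := Finset.card_filter_le _ _
    _ = L.length := Finset.card_range _

/-- The sides of the successive Durfee squares (from the top) of a partition
whose parts are listed in weakly decreasing order. -/
def durfeeSides (L : List ℕ) : List ℕ :=
  if h : durfee L = 0 then [] else durfee L :: durfeeSides (L.drop (durfee L))
  termination_by L.length
  decreasing_by
    have h1 := durfee_le L
    simp only [List.length_drop]
    omega

/-- The sides of the successive lower-Durfee squares (from the bottom) of a
partition whose parts are listed in weakly *increasing* order `M`: the first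
lower-Durfee square has side `min M.head M.length`, and one recurses on the
remaining (larger) parts. -/
def lowerSides (M : List ℕ) : List ℕ :=
  if h : min (M.headD 0) M.length = 0 then []
  else min (M.headD 0) M.length :: lowerSides (M.drop (min (M.headD 0) M.length))
  termination_by M.length
  decreasing_by
    simp only [List.length_drop]
    omega

/-!
The lower-Durfee squares cut the parts of `M`, read from the bottom, into consecutive blocks.
Every block but the topmost is exactly as wide as its bottom part, while the topmost one, of
side `d`, consists of the last `d` parts, all at least `d`. The Rogers–Ramanujan condition makes
every other part at most `d`, so the first Durfee square from the top is the topmost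
lower-Durfee square. Removing it leaves the partition formed by the remaining blocks, which again
satisfies the condition: its topmost block is as wide as its bottom part, which bounds every part
below it by sortedness.
-/

theorem lowerSides_of_eq_zero {M : List ℕ} (h : min (M.headD 0) M.length = 0) :
    lowerSides M = [] := by
  rw [lowerSides, dif_pos h]

theorem lowerSides_of_ne_zero {M : List ℕ} (h : min (M.headD 0) M.length ≠ 0) :
    lowerSides M =
      min (M.headD 0) M.length :: lowerSides (M.drop (min (M.headD 0) M.length)) := by
  rw [lowerSides, dif_neg h]

theorem lowerSides_nil : lowerSides [] = [] := lowerSides_of_eq_zero rfl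

theorem lowerSides_eq_nil_iff {M : List ℕ} (hpos : ∀ x ∈ M, 1 ≤ x) :
    lowerSides M = [] ↔ M = [] := by
  refine ⟨fun h => ?_, fun h => h ▸ lowerSides_nil⟩
  by_contra hM
  obtain ⟨a, l, rfl⟩ := List.exists_cons_of_ne_nil hM
  have := hpos a List.mem_cons_self
  rw [lowerSides_of_ne_zero (by simp only [List.headD_cons, List.length_cons]; omega)] at h
  exact List.cons_ne_nil _ _ h

theorem eq_min_of_lowerSides_eq_cons {M r : List ℕ} {a : ℕ} (h : lowerSides M = a :: r) :
    a = min (M.headD 0) M.length ∧ r = lowerSides (M.drop a) := by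
  by_cases h0 : min (M.headD 0) M.length = 0
  · simp [lowerSides_of_eq_zero h0] at h
  · rw [lowerSides_of_ne_zero h0, List.cons.injEq] at h
    exact ⟨h.1.symm, h.1 ▸ h.2.symm⟩

/-- If the first block is not the last, it did not run out of parts, so its side is its bottom
part rather than the number of parts. -/
theorem eq_headD_of_lowerSides_eq_cons_cons {M r : List ℕ} {a b : ℕ}
    (h : lowerSides M = a :: b :: r) : a = M.headD 0 := by
  obtain ⟨ha, hr⟩ := eq_min_of_lowerSides_eq_cons h
  have : M.drop a ≠ [] := fun hd => by simp [hd, lowerSides_nil] at hr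
  have : a < M.length := by simpa using this
  omega

theorem pos_of_mem_lowerSides {M : List ℕ} {a : ℕ} (ha : a ∈ lowerSides M) : 0 < a := by
  induction M using lowerSides.induct with
  | case1 M h => simp [lowerSides_of_eq_zero h] at ha
  | case2 M h ih =>
    rw [lowerSides_of_ne_zero h, List.mem_cons] at ha
    rcases ha with rfl | ha
    · omega
    · exact ih ha

theorem sum_lowerSides_le (M : List ℕ) : (lowerSides M).sum ≤ M.length := by
  induction M using lowerSides.induct with
  | case1 M h => simp [lowerSides_of_eq_zero h]
  | case2 M h ih =>
    rw [lowerSides_of_ne_zero h, List.sum_cons]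
    simp only [List.length_drop] at ih
    omega

theorem sum_lowerSides {M : List ℕ} (hpos : ∀ x ∈ M, 1 ≤ x) :
    (lowerSides M).sum = M.length := by
  induction M using lowerSides.induct with
  | case1 M h =>
    rw [lowerSides_of_eq_zero h, (lowerSides_eq_nil_iff hpos).1 (lowerSides_of_eq_zero h)]
    rfl
  | case2 M h ih =>
    rw [lowerSides_of_ne_zero h, List.sum_cons,
      ih fun x hx => hpos x (List.mem_of_mem_drop hx), List.length_drop]
    omega

theorem lowerSides_drop_sum_take (M : List ℕ) (j : ℕ) :
    lowerSides (M.drop ((lowerSides M).take j).sum) = (lowerSides M).drop j := by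
  induction M using lowerSides.induct generalizing j with
  | case1 M h => simp [lowerSides_of_eq_zero h]
  | case2 M h ih =>
    cases j with
    | zero => simp
    | succ j =>
      rw [lowerSides_of_ne_zero h, List.take_succ_cons, List.sum_cons, List.drop_succ_cons,
        ← List.drop_drop, ih]

theorem lowerSides_take_sum_take (M : List ℕ) (j : ℕ) :
    lowerSides (M.take ((lowerSides M).take j).sum) = (lowerSides M).take j := by
  induction M using lowerSides.induct generalizing j with
  | case1 M h => simp [lowerSides_of_eq_zero h, lowerSides_nil]
  | case2 M h ih =>
    cases j with
    | zero => simp [lowerSides_nil]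
    | succ j =>
      rw [lowerSides_of_ne_zero h, List.take_succ_cons, List.sum_cons]
      set d := min (M.headD 0) M.length
      set s := ((lowerSides (M.drop d)).take j).sum
      have hs : s ≤ M.length - d := calc
        s ≤ (lowerSides (M.drop d)).sum := (List.take_sublist _ _).sum_le_sum (by simp)
        _ ≤ M.length - d := by simpa using sum_lowerSides_le (M.drop d)
      have hhead : (M.take (d + s)).headD 0 = M.headD 0 := by
        simp [List.headD_eq_head?_getD, List.head?_take, h]
      -- the first block of `M.take (d + s)` is the first block of `M`, even when `d` was
      -- limited by the length of `M`, since then `s = 0`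
      have hmin : min ((M.take (d + s)).headD 0) (M.take (d + s)).length = d := by
        rw [hhead, List.length_take]
        omega
      rw [lowerSides_of_ne_zero (by omega), hmin, List.drop_take, Nat.add_sub_cancel_left, ih]

theorem lowerSides_take_of_eq_append {M t : List ℕ} {d : ℕ} (h : lowerSides M = t ++ [d]) :
    lowerSides (M.take t.sum) = t := by
  simpa [h] using lowerSides_take_sum_take M t.length

theorem le_headD_drop_of_lowerSides_eq_append {M t : List ℕ} {d : ℕ}
    (h : lowerSides M = t ++ [d]) : d ≤ (M.drop t.sum).headD 0 := by
  have hlast : lowerSides (M.drop t.sum) = [d] := by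
    simpa [h] using lowerSides_drop_sum_take M t.length
  exact (eq_min_of_lowerSides_eq_cons hlast).1 ▸ min_le_left _ _

theorem eq_headD_drop_of_lowerSides_eq_append {M t : List ℕ} {a b : ℕ}
    (h : lowerSides M = t ++ [a, b]) : a = (M.drop t.sum).headD 0 := by
  have hlast : lowerSides (M.drop t.sum) = [a, b] := by
    simpa [h] using lowerSides_drop_sum_take M t.length
  exact eq_headD_of_lowerSides_eq_cons_cons hlast

theorem headD_le_of_mem_of_pairwise {N : List ℕ} (hN : N.Pairwise (· ≤ ·)) {x : ℕ}
    (hx : x ∈ N) : N.headD 0 ≤ x := by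
  cases N with
  | nil => simp at hx
  | cons a l =>
    rcases List.mem_cons.1 hx with rfl | hx
    · exact le_rfl
    · exact List.rel_of_pairwise_cons hN hx

theorem le_headD_drop_of_mem_take {M : List ℕ} (hM : M.Pairwise (· ≤ ·)) {n x : ℕ}
    (hn : n < M.length) (hx : x ∈ M.take n) : x ≤ (M.drop n).headD 0 := by
  obtain ⟨a, r, har⟩ := List.exists_cons_of_ne_nil (by simpa using hn : M.drop n ≠ [])
  rw [← List.take_append_drop n M, List.pairwise_append] at hM
  exact hM.2.2 x hx _ (by simp [har])

/-- The Rogers–Ramanujan condition passes from `M` to `M` with its topmost lower-Durfee square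
removed. -/
theorem rr_take_of_lowerSides_eq_append {M t : List ℕ} {d : ℕ} (hsort : M.Pairwise (· ≤ ·))
    (hpos : ∀ x ∈ M, 1 ≤ x) (h : lowerSides M = t ++ [d]) :
    ∀ x ∈ (M.take t.sum).take ((M.take t.sum).length - (lowerSides (M.take t.sum)).getLastD 0),
      x ≤ (lowerSides (M.take t.sum)).getLastD 0 := by
  rw [lowerSides_take_of_eq_append h]
  rcases List.eq_nil_or_concat' t with rfl | ⟨t', d', rfl⟩
  · simp
  have hsum : t'.sum + (d' + d) = M.length := by simpa [h] using sum_lowerSides hpos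
  have hd : 0 < d := pos_of_mem_lowerSides (M := M) (by simp [h])
  have hidx : min (t'.sum + d') M.length - d' = t'.sum := by omega
  intro x hx
  simp only [List.sum_append, List.sum_singleton, List.length_take, List.getLastD_eq_getLast?,
    List.getLast?_append, List.getLast?_singleton, Option.some_or, Option.getD_some] at hx ⊢
  rw [hidx, List.take_take, min_eq_left (by omega)] at hx
  exact (le_headD_drop_of_mem_take hsort (by omega) hx).trans_eq
    (eq_headD_drop_of_lowerSides_eq_append (by simpa using h)).symm

theorem getD_le_of_forall_le {K : List ℕ} {m : ℕ} (hK : ∀ x ∈ K, x ≤ m) (i : ℕ) :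
    K.getD i 0 ≤ m := by
  by_cases hi : i < K.length
  · rw [List.getD_eq_getElem _ _ hi]
    exact hK _ (List.getElem_mem hi)
  · rw [List.getD_eq_default _ _ (by omega)]
    exact Nat.zero_le m

theorem durfee_append {L K : List ℕ} (hL : ∀ x ∈ L, L.length ≤ x)
    (hK : ∀ x ∈ K, x ≤ L.length) : durfee (L ++ K) = L.length := by
  suffices (Finset.range (L ++ K).length).filter (fun i => i + 1 ≤ (L ++ K).getD i 0) =
      Finset.range L.length by
    rw [durfee, this, Finset.card_range]
  ext i
  simp only [Finset.mem_filter, Finset.mem_range, List.length_append]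
  constructor
  · rintro ⟨-, hi⟩
    by_contra! hLi
    rw [List.getD_append_right _ _ _ _ hLi] at hi
    have := getD_le_of_forall_le hK (i - L.length)
    omega
  · intro hi
    rw [List.getD_append _ _ _ _ hi, List.getD_eq_getElem _ _ hi]
    have := hL _ (List.getElem_mem hi)
    omega

theorem durfeeSides_nil : durfeeSides [] = [] := by
  rw [durfeeSides, dif_pos (by decide)]

theorem durfeeSides_append {L K : List ℕ} (hL0 : L ≠ []) (hL : ∀ x ∈ L, L.length ≤ x)
    (hK : ∀ x ∈ K, x ≤ L.length) : durfeeSides (L ++ K) = L.length :: durfeeSides K := by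
  rw [durfeeSides, durfee_append hL hK, dif_neg (by simpa using hL0), List.drop_left]

theorem durfeeSides_reverse_of_lowerSides_eq_append {M t : List ℕ} {d : ℕ}
    (hsort : M.Pairwise (· ≤ ·)) (hpos : ∀ x ∈ M, 1 ≤ x) (h : lowerSides M = t ++ [d])
    (hRR : ∀ x ∈ M.take t.sum, x ≤ d) :
    durfeeSides M.reverse = d :: durfeeSides (M.take t.sum).reverse := by
  have hsum : t.sum + d = M.length := by simpa [h] using sum_lowerSides hpos
  have hd : 0 < d := pos_of_mem_lowerSides (M := M) (by simp [h])
  have hlen : (M.drop t.sum).reverse.length = d := by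
    simp only [List.length_reverse, List.length_drop]; omega
  have hne : (M.drop t.sum).reverse ≠ [] := by
    rw [← List.length_pos_iff, hlen]
    exact hd
  have hbig : ∀ x ∈ (M.drop t.sum).reverse, (M.drop t.sum).reverse.length ≤ x := fun x hx =>
    hlen ▸ (le_headD_drop_of_lowerSides_eq_append h).trans
      (headD_le_of_mem_of_pairwise (hsort.sublist (List.drop_sublist _ _)) (List.mem_reverse.1 hx))
  have hsmall : ∀ x ∈ (M.take t.sum).reverse, x ≤ (M.drop t.sum).reverse.length := fun x hx =>
    hlen ▸ hRR x (List.mem_reverse.1 hx)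
  have hsplit : M.reverse = (M.drop t.sum).reverse ++ (M.take t.sum).reverse := by
    rw [← List.reverse_append, List.take_append_drop]
  rw [hsplit, durfeeSides_append hne hbig hsmall, hlen]

theorem durfeeSides_reverse_eq_reverse_lowerSides (M : List ℕ) (hsort : M.Pairwise (· ≤ ·))
    (hpos : ∀ x ∈ M, 1 ≤ x)
    (hRR : ∀ x ∈ M.take (M.length - (lowerSides M).getLastD 0),
      x ≤ (lowerSides M).getLastD 0) :
    durfeeSides M.reverse = (lowerSides M).reverse := by
  rcases List.eq_nil_or_concat' (lowerSides M) with ht | ⟨t, d, ht⟩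
  · simp [(lowerSides_eq_nil_iff hpos).1 ht, lowerSides_nil, durfeeSides_nil]
  have hsum : t.sum + d = M.length := by simpa [ht] using sum_lowerSides hpos
  have hd : 0 < d := pos_of_mem_lowerSides (M := M) (by simp [ht])
  have hRR' : ∀ x ∈ M.take t.sum, x ≤ d := by
    simpa [ht, show M.length - d = t.sum by omega] using hRR
  rw [durfeeSides_reverse_of_lowerSides_eq_append hsort hpos ht hRR',
    durfeeSides_reverse_eq_reverse_lowerSides (M.take t.sum)
      (hsort.sublist (List.take_sublist _ _)) (fun x hx => hpos x (List.mem_of_mem_take hx))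
      (rr_take_of_lowerSides_eq_append hsort hpos ht),
    lowerSides_take_of_eq_append ht, ht]
  simp
termination_by M.length
decreasing_by simp only [List.length_take]; omega

/-- **Lemma 3.2.** Let `π` be a Rogers–Ramanujan partition with exactly `s`
successive lower-Durfee squares, i.e. a partition (with parts listed in weakly
increasing order `M`, all parts positive) having exactly `s` successive
lower-Durfee squares, all of whose parts below the `s`-th (topmost)
lower-Durfee square are at most its side `d_s`.  Then `π` has exactly `s`
successive Durfee squares; indeed, the lower-Durfee squares form the Durfee
squares. -/
theorem rr_lower_durfee_eq_durfee (M : List ℕ) (hsort : M.Pairwise (· ≤ ·))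
    (hpos : ∀ x ∈ M, 1 ≤ x) (s : ℕ) (hs : (lowerSides M).length = s)
    (hRR : ∀ x ∈ M.take (M.length - (lowerSides M).getLastD 0),
      x ≤ (lowerSides M).getLastD 0) :
    (durfeeSides M.reverse).length = s ∧
      durfeeSides M.reverse = (lowerSides M).reverse := by
  have h := durfeeSides_reverse_eq_reverse_lowerSides M hsort hpos hRR
  exact ⟨by rw [h, List.length_reverse, hs], h⟩
end

section
/- Let π be a partition with exactly s successive lower-Durfee squares. Then π has exactly s successive Durfee squares. -/
/-!
Both greedy procedures compute the least number of runs of consecutive parts into which the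
parts can be cut so that every part of a run is at least the length of the run (the rows of the
run carry a square); this number does not change when the order of the parts is reversed.
Cutting off the longest admissible first run is optimal because a nonempty suffix of an
admissible run is admissible: hence the greedy count started at any position is at most the
number of runs of any competing cut.
-/

def FitsSquare (B : List ℕ) : Prop := B ≠ [] ∧ ∀ x ∈ B, B.length ≤ x

def SquareCover (L : List ℕ) (k : ℕ) : Prop :=
  ∃ P : List (List ℕ), P.flatten = L ∧ P.length = k ∧ ∀ B ∈ P, FitsSquare B

namespace FitsSquare

variable {B : List ℕ}

theorem reverse (h : FitsSquare B) : FitsSquare B.reverse :=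
  ⟨by simpa using h.1, by simpa using h.2⟩

theorem drop (h : FitsSquare B) {m : ℕ} (hm : m < B.length) : FitsSquare (B.drop m) :=
  ⟨by simpa [List.drop_eq_nil_iff] using hm,
    fun x hx => le_trans (by simp) (h.2 x (List.mem_of_mem_drop hx))⟩

end FitsSquare

namespace SquareCover

variable {L : List ℕ} {k : ℕ}

theorem nil : SquareCover [] 0 := ⟨[], rfl, rfl, by simp⟩

theorem cons {B : List ℕ} (hB : FitsSquare B) (h : SquareCover L k) :
    SquareCover (B ++ L) (k + 1) := by
  obtain ⟨P, rfl, rfl, hP⟩ := h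
  exact ⟨B :: P, rfl, rfl, List.forall_mem_cons.2 ⟨hB, hP⟩⟩

theorem reverse (h : SquareCover L k) : SquareCover L.reverse k := by
  obtain ⟨P, rfl, rfl, hP⟩ := h
  refine ⟨(P.map List.reverse).reverse, List.reverse_flatten.symm, by simp, ?_⟩
  simp only [List.mem_reverse, List.mem_map, forall_exists_index, and_imp]
  rintro _ B hB rfl
  exact (hP B hB).reverse

end SquareCover

theorem squareCover_reverse_iff {L : List ℕ} {k : ℕ} :
    SquareCover L.reverse k ↔ SquareCover L k :=
  ⟨fun h => by simpa using h.reverse, SquareCover.reverse⟩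

structure IsGreedySquareCount (S : List ℕ → Prop) (g c : List ℕ → ℕ) : Prop where
  drop : ∀ L m, S L → S (L.drop m)
  isGreatest_step : ∀ L, S L → L ≠ [] →
    IsGreatest {b | b ≤ L.length ∧ FitsSquare (L.take b)} (g L)
  count_nil : c [] = 0
  count_of_ne_nil : ∀ L, S L → L ≠ [] → c L = c (L.drop (g L)) + 1

namespace IsGreedySquareCount

variable {S : List ℕ → Prop} {g c : List ℕ → ℕ}

theorem squareCover_count (h : IsGreedySquareCount S g c) {L : List ℕ} (hL : S L) :
    SquareCover L (c L) := by
  by_cases hne : L = []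
  · subst hne
    rw [h.count_nil]
    exact SquareCover.nil
  have hfit : FitsSquare (L.take (g L)) := (h.isGreatest_step L hL hne).1.2
  have hcover := (h.squareCover_count (h.drop L (g L) hL)).cons hfit
  rwa [List.take_append_drop, ← h.count_of_ne_nil L hL hne] at hcover
termination_by L.length
decreasing_by
  have hg : g L ≠ 0 := fun h0 => hfit.1 (by simp [h0])
  have hlen : L.length ≠ 0 := by simpa using hne
  simp only [List.length_drop]
  omega

theorem count_drop_le (h : IsGreedySquareCount S g c) {P : List (List ℕ)}
    (hP : ∀ B ∈ P, FitsSquare B) (hS : S P.flatten) (m : ℕ) :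
    c (P.flatten.drop m) ≤ P.length := by
  induction P generalizing m with
  | nil => simp [h.count_nil]
  | cons B P ih =>
    rw [List.forall_mem_cons] at hP
    rw [List.flatten_cons] at hS ⊢
    have hR : S P.flatten := by
      simpa [List.drop_left'] using h.drop _ B.length hS
    rw [List.length_cons]
    rcases le_or_gt B.length m with hm | hm
    · rw [List.drop_append, List.drop_eq_nil_of_le hm, List.nil_append]
      exact (ih hP.2 hR _).trans (Nat.le_succ _)
    · -- The greedy run starting at `m` reaches at least to the end of `B`.
      rw [List.drop_append_of_le_length hm.le]
      set N := B.drop m ++ P.flatten with hN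
      have hSN : S N := by
        rw [hN, ← List.drop_append_of_le_length hm.le]
        exact h.drop _ m hS
      have hNne : N ≠ [] := by simp [hN, hm]
      have hstep : (B.drop m).length ≤ g N := by
        refine (h.isGreatest_step N hSN hNne).2 ⟨by simp [hN], ?_⟩
        rw [hN, List.take_left' rfl]
        exact hP.1.drop hm
      rw [h.count_of_ne_nil N hSN hNne, hN, List.drop_append,
        List.drop_eq_nil_of_le hstep, List.nil_append]
      exact Nat.succ_le_succ (ih hP.2 hR _)

theorem isLeast (h : IsGreedySquareCount S g c) {L : List ℕ} (hL : S L) :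
    IsLeast {k | SquareCover L k} (c L) := by
  refine ⟨h.squareCover_count hL, ?_⟩
  rintro k ⟨P, rfl, rfl, hP⟩
  simpa using h.count_drop_le hP hL 0

end IsGreedySquareCount

theorem isGreatest_min_headD_length {M : List ℕ} (hsort : M.Pairwise (· ≤ ·))
    (hpos : ∀ x ∈ M, 1 ≤ x) (hne : M ≠ []) :
    IsGreatest {b | b ≤ M.length ∧ FitsSquare (M.take b)} (min (M.headD 0) M.length) := by
  obtain ⟨a, t, rfl⟩ := List.exists_cons_of_ne_nil hne
  have ha : 1 ≤ a := hpos a List.mem_cons_self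
  simp only [List.headD_cons]
  refine ⟨⟨min_le_right _ _, ?_, ?_⟩, ?_⟩
  · rw [Ne, List.take_eq_nil_iff]
    simp only [List.length_cons, reduceCtorEq, or_false]
    omega
  · intro x hx
    have hax : a ≤ x := by
      rcases List.mem_cons.1 (List.mem_of_mem_take hx) with rfl | hx
      · exact le_rfl
      · exact List.rel_of_pairwise_cons hsort hx
    exact (List.length_take_le _ _).trans ((min_le_left _ _).trans hax)
  · rintro b ⟨hb, hne, hfit⟩
    have hb0 : b ≠ 0 := fun h0 => hne (by simp [h0])
    obtain ⟨b, rfl⟩ := Nat.exists_eq_succ_of_ne_zero hb0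
    have := hfit a (by simp)
    simp only [List.take_succ_cons, List.length_cons, List.length_take] at this hb ⊢
    omega

theorem isGreedySquareCount_lowerSides :
    IsGreedySquareCount (fun M => M.Pairwise (· ≤ ·) ∧ ∀ x ∈ M, 1 ≤ x)
      (fun M => min (M.headD 0) M.length) (fun M => (lowerSides M).length) where
  drop _ _ hM := ⟨hM.1.drop, fun x hx => hM.2 x (List.mem_of_mem_drop hx)⟩
  isGreatest_step _ hM hne := isGreatest_min_headD_length hM.1 hM.2 hne
  count_nil := by rw [lowerSides, dif_pos (by simp)]; rfl
  count_of_ne_nil M hM hne := by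
    have hstep := (isGreatest_min_headD_length hM.1 hM.2 hne).1.2.1
    rw [lowerSides, dif_neg (fun h0 => hstep (by rw [h0, List.take_zero])), List.length_cons]

theorem getD_le_getD_of_pairwise_ge {L : List ℕ} (hL : L.Pairwise (· ≥ ·)) {i j : ℕ}
    (hij : i ≤ j) : L.getD j 0 ≤ L.getD i 0 := by
  rcases lt_or_ge j L.length with hj | hj
  · rw [List.getD_eq_getElem _ _ hj, List.getD_eq_getElem _ _ (hij.trans_lt hj)]
    rcases hij.lt_or_eq with hij | rfl
    · exact List.pairwise_iff_getElem.1 hL i j _ hj hij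
    · exact le_rfl
  · rw [List.getD_eq_default _ _ hj]
    exact Nat.zero_le _

theorem lt_durfee_iff {L : List ℕ} (hL : L.Pairwise (· ≥ ·)) {i : ℕ} :
    i < durfee L ↔ i + 1 ≤ L.getD i 0 := by
  unfold durfee
  constructor
  · intro hi
    by_contra! hlt
    -- Below a row that is too short, every row is too short.
    have hsub : (Finset.range L.length).filter (fun j => j + 1 ≤ L.getD j 0) ⊆
        Finset.range i := by
      intro j hj
      simp only [Finset.mem_filter, Finset.mem_range] at hj ⊢
      by_contra! hij
      have := getD_le_getD_of_pairwise_ge hL hij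
      omega
    simpa using (Finset.card_le_card hsub).trans_lt' hi
  · intro hi
    have hlen : i < L.length := by
      by_contra! h
      rw [List.getD_eq_default _ _ h] at hi
      omega
    have hsub : Finset.range (i + 1) ⊆
        (Finset.range L.length).filter (fun j => j + 1 ≤ L.getD j 0) := by
      intro j hj
      simp only [Finset.mem_filter, Finset.mem_range] at hj ⊢
      have := getD_le_getD_of_pairwise_ge hL (Nat.le_of_lt_succ hj)
      omega
    simpa using Finset.card_le_card hsub

theorem isGreatest_durfee {L : List ℕ} (hsort : L.Pairwise (· ≥ ·))
    (hpos : ∀ x ∈ L, 1 ≤ x) (hne : L ≠ []) :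
    IsGreatest {b | b ≤ L.length ∧ FitsSquare (L.take b)} (durfee L) := by
  have hd : 0 < durfee L := by
    obtain ⟨a, t, rfl⟩ := List.exists_cons_of_ne_nil hne
    simpa [lt_durfee_iff hsort] using hpos a List.mem_cons_self
  have hlast := (lt_durfee_iff hsort).1 (Nat.sub_lt hd Nat.one_pos)
  refine ⟨⟨durfee_le L, ?_, ?_⟩, ?_⟩
  · simpa [List.take_eq_nil_iff, hne] using hd.ne'
  · intro x hx
    obtain ⟨j, hj, rfl⟩ := List.mem_iff_getElem.1 hx
    simp only [List.length_take] at hj ⊢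
    rw [List.getElem_take, ← List.getD_eq_getElem _ 0]
    have := getD_le_getD_of_pairwise_ge hsort (show j ≤ durfee L - 1 by omega)
    omega
  · rintro b ⟨hb, hne, hfit⟩
    have hb0 : b ≠ 0 := fun h0 => hne (by simp [h0])
    have hmem : L.getD (b - 1) 0 ∈ L.take b := by
      rw [List.getD_eq_getElem _ _ (by omega), ← List.getElem_take (j := b)]
      · exact List.getElem_mem _
      · simp only [List.length_take]; omega
    have := hfit _ hmem
    rw [List.length_take, min_eq_left hb] at this
    have := (lt_durfee_iff hsort).2 (show b - 1 + 1 ≤ L.getD (b - 1) 0 by omega)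
    omega

theorem isGreedySquareCount_durfeeSides :
    IsGreedySquareCount (fun L => L.Pairwise (· ≥ ·) ∧ ∀ x ∈ L, 1 ≤ x) durfee
      (fun L => (durfeeSides L).length) where
  drop _ _ hL := ⟨hL.1.drop, fun x hx => hL.2 x (List.mem_of_mem_drop hx)⟩
  isGreatest_step _ hL hne := isGreatest_durfee hL.1 hL.2 hne
  count_nil := by rw [durfeeSides, dif_pos (by simp [durfee])]; rfl
  count_of_ne_nil L hL hne := by
    have hstep := (isGreatest_durfee hL.1 hL.2 hne).1.2.1
    rw [durfeeSides, dif_neg (fun h0 => hstep (by rw [h0, List.take_zero])), List.length_cons]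

/-- **Lemma 3.3.** Let `π` be a partition (with parts listed in weakly
increasing order `M`, all parts positive) with exactly `s` successive
lower-Durfee squares.  Then `π` has exactly `s` successive Durfee squares. -/
theorem lower_durfee_count_eq_durfee_count (M : List ℕ)
    (hsort : M.Pairwise (· ≤ ·)) (hpos : ∀ x ∈ M, 1 ≤ x) (s : ℕ)
    (hs : (lowerSides M).length = s) :
    (durfeeSides M.reverse).length = s := by
  have hlower := isGreedySquareCount_lowerSides.isLeast ⟨hsort, hpos⟩
  have hdurfee := isGreedySquareCount_durfeeSides.isLeast
    ⟨List.pairwise_reverse.2 hsort, fun x hx => hpos x (List.mem_reverse.1 hx)⟩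
  simp only [squareCover_reverse_iff] at hdurfee
  exact hs ▸ hdurfee.unique hlower
end
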